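/- arXiv:1812.01403 — 3 statements merged into one kernel-verified Lean document; each statement's English description precedes it below -/
import Mathlib

section
/- Decomposition of the area anomaly: let (X_n)_{n≥0} be a discrete-time process on ℝ^d on a probability space (Ω, F, P) with |X_{n+1} − X_n| ≤ K P-a.s., let τ_1 < τ_2 be F-measurable, P-a.s. finite, integer-valued random times with E[(τ_2 − τ_1)²] < ∞, let v ∈ ℝ^d, and set X̄_n = X_n − n·v and Γ = E[A_{τ_1,τ_2}(X̄)] / E[τ_2 − τ_1]. Then Γ = E[A_{τ_1,τ_2}(X)] / E[τ_2 − τ_1] + E[Σ_{τ_1 < k < ℓ ≤ τ_2} ((v ⊗ ΔX_k + ΔX_ℓ ⊗ v) − (ΔX_k ⊗ v + v ⊗ ΔX_ℓ))] / (2 E[τ_2 − τ_1]), where ΔX_k = X_k − X_{k−1}; in particular all expectations above are finite and E[τ_2 − τ_1] > 0. -/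
/-! Since `ΔX̄_k = ΔX_k − v`, expanding the antisymmetrised products shows pathwise that
`A_{m,n}(X̄) = A_{m,n}(X) + ½ · driftSum`: the terms quadratic in `v` cancel by antisymmetry.
With increments bounded by `K`, every entry of `A(X)` and of the drift term over `[τ₁, τ₂]` is
`O((τ₂ − τ₁)²)`, so the second moment of `τ₂ − τ₁` makes them integrable and the pathwise identity
passes to expectations by linearity. Finally `τ₂ − τ₁ ≥ 1` a.s. gives `E[τ₂ − τ₁] ≥ 1`. -/

open Matrix Finset

/-- `tens a b` is the `d × d` matrix `(a i * b j)_{i,j}`, i.e. the tensor product `a ⊗ b`. -/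
noncomputable def tens {d : ℕ} (a b : Fin d → ℝ) : Matrix (Fin d) (Fin d) ℝ :=
  Matrix.of fun i j => a i * b j

/-- The increment `Δx_k = x_k − x_{k−1}` of a sequence `x : ℕ → ℝ^d`. -/
noncomputable def inc {d : ℕ} (x : ℕ → Fin d → ℝ) (k : ℕ) : Fin d → ℝ :=
  x k - x (k - 1)

/-- The discrete second-level iterated integral
`S_{m,n}(x) = Σ_{m+1 ≤ k < ℓ ≤ n} Δx_k ⊗ Δx_ℓ + (1/2) Σ_{m+1 ≤ k ≤ n} Δx_k ⊗ Δx_k`. -/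
noncomputable def iint {d : ℕ} (x : ℕ → Fin d → ℝ) (m n : ℕ) : Matrix (Fin d) (Fin d) ℝ :=
  (∑ k ∈ Finset.Icc (m + 1) n, ∑ l ∈ Finset.Icc (k + 1) n, tens (inc x k) (inc x l)) +
    (1 / 2 : ℝ) • ∑ k ∈ Finset.Icc (m + 1) n, tens (inc x k) (inc x k)

/-- The discrete signed area `A_{m,n}(x) = (1/2)(S_{m,n}(x) − S_{m,n}(x)ᵀ)`. -/
noncomputable def sarea {d : ℕ} (x : ℕ → Fin d → ℝ) (m n : ℕ) : Matrix (Fin d) (Fin d) ℝ :=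
  (1 / 2 : ℝ) • (iint x m n - (iint x m n)ᵀ)

open MeasureTheory

/-- Entrywise expectation of a matrix-valued random variable. -/
noncomputable def matExp {Ω : Type*} [MeasurableSpace Ω] (P : Measure Ω) {d : ℕ}
    (M : Ω → Matrix (Fin d) (Fin d) ℝ) : Matrix (Fin d) (Fin d) ℝ :=
  Matrix.of fun i j => ∫ ω, M ω i j ∂P

/-- The drift cross-term
`Σ_{m < k < ℓ ≤ n} ((v ⊗ Δx_k + Δx_ℓ ⊗ v) − (Δx_k ⊗ v + v ⊗ Δx_ℓ))`. -/
noncomputable def driftSum {d : ℕ} (x : ℕ → Fin d → ℝ) (v : Fin d → ℝ) (m n : ℕ) :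
    Matrix (Fin d) (Fin d) ℝ :=
  ∑ k ∈ Finset.Icc (m + 1) n, ∑ l ∈ Finset.Icc (k + 1) n,
    ((tens v (inc x k) + tens (inc x l) v) - (tens (inc x k) v + tens v (inc x l)))

section Algebra

variable {d : ℕ}

lemma sarea_apply (x : ℕ → Fin d → ℝ) (m n : ℕ) (i j : Fin d) :
    sarea x m n i j = (1 / 2 : ℝ) * ∑ k ∈ Icc (m + 1) n, ∑ l ∈ Icc (k + 1) n,
      (inc x k i * inc x l j - inc x k j * inc x l i) := by
  have hdiag : ∑ k ∈ Icc (m + 1) n, inc x k j * inc x k i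
      = ∑ k ∈ Icc (m + 1) n, inc x k i * inc x k j :=
    sum_congr rfl fun k _ => mul_comm _ _
  simp only [sarea, iint, tens, Matrix.smul_apply, Matrix.sub_apply, Matrix.add_apply,
    transpose_apply, Matrix.sum_apply, of_apply, smul_eq_mul, sum_sub_distrib, hdiag]
  ring

lemma driftSum_apply (x : ℕ → Fin d → ℝ) (v : Fin d → ℝ) (m n : ℕ) (i j : Fin d) :
    driftSum x v m n i j = ∑ k ∈ Icc (m + 1) n, ∑ l ∈ Icc (k + 1) n,
      (v i * inc x k j + inc x l i * v j - (inc x k i * v j + v i * inc x l j)) := by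
  simp [driftSum, tens, Matrix.sum_apply]

lemma inc_sub_natCast_smul (x : ℕ → Fin d → ℝ) (v : Fin d → ℝ) {k : ℕ} (hk : 1 ≤ k) :
    inc (fun n => x n - (n : ℝ) • v) k = inc x k - v := by
  obtain ⟨k, rfl⟩ := Nat.exists_eq_add_of_le' hk
  ext i
  simp only [inc, Nat.add_sub_cancel, Pi.sub_apply, Pi.smul_apply, smul_eq_mul]
  push_cast
  ring

lemma sarea_sub_natCast_smul (x : ℕ → Fin d → ℝ) (v : Fin d → ℝ) (m n : ℕ) :
    sarea (fun k => x k - (k : ℝ) • v) m n = sarea x m n + (1 / 2 : ℝ) • driftSum x v m n := by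
  ext i j
  rw [Matrix.add_apply, Matrix.smul_apply, smul_eq_mul, sarea_apply, sarea_apply, driftSum_apply,
    ← mul_add, ← sum_add_distrib]
  congr 1
  refine sum_congr rfl fun k hk => ?_
  rw [← sum_add_distrib]
  refine sum_congr rfl fun l hl => ?_
  have hk1 : 1 ≤ k := by grind
  have hl1 : 1 ≤ l := by grind
  simp only [inc_sub_natCast_smul x v hk1, inc_sub_natCast_smul x v hl1, Pi.sub_apply]
  ring

end Algebra

section Bounds

lemma abs_sum_Icc_sum_Icc_le {f : ℕ → ℕ → ℝ} {D : ℝ} (hf : ∀ k l, |f k l| ≤ D)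
    {m n : ℕ} (hmn : m ≤ n) :
    |∑ k ∈ Icc (m + 1) n, ∑ l ∈ Icc (k + 1) n, f k l| ≤ ((n : ℝ) - m) ^ 2 * D := by
  have hD : 0 ≤ D := (abs_nonneg _).trans (hf 0 0)
  have hcard : ∀ k, m ≤ k → ((Icc (k + 1) n).card : ℝ) ≤ n - m := fun k hk => by
    rw [Nat.card_Icc, Nat.add_sub_add_right, le_sub_iff_add_le]
    norm_cast
    omega
  have hinner : ∀ k ∈ Icc (m + 1) n, |∑ l ∈ Icc (k + 1) n, f k l| ≤ (n - m) * D := fun k hk =>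
    calc |∑ l ∈ Icc (k + 1) n, f k l|
        ≤ (Icc (k + 1) n).card • D :=
          (abs_sum_le_sum_abs _ _).trans (sum_le_card_nsmul _ _ _ fun l _ => hf k l)
      _ ≤ (n - m) * D := by
          rw [nsmul_eq_mul]
          exact mul_le_mul_of_nonneg_right (hcard k (by grind)) hD
  calc |∑ k ∈ Icc (m + 1) n, ∑ l ∈ Icc (k + 1) n, f k l|
      ≤ (Icc (m + 1) n).card • ((n - m) * D) :=
        (abs_sum_le_sum_abs _ _).trans (sum_le_card_nsmul _ _ _ hinner)
    _ ≤ (n - m) * ((n - m) * D) := by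
        rw [nsmul_eq_mul]
        exact mul_le_mul_of_nonneg_right (hcard m le_rfl) (by grind)
    _ = ((n : ℝ) - m) ^ 2 * D := by ring

variable {d : ℕ} {x : ℕ → Fin d → ℝ} {B : ℝ}

lemma abs_sarea_apply_le (hx : ∀ k, ‖inc x k‖ ≤ B) {m n : ℕ} (hmn : m ≤ n) (i j : Fin d) :
    |sarea x m n i j| ≤ ((n : ℝ) - m) ^ 2 * B ^ 2 := by
  have hxi : ∀ k i, |inc x k i| ≤ B := fun k i => (norm_le_pi_norm (inc x k) i).trans (hx k)
  have hB : 0 ≤ B := (norm_nonneg _).trans (hx 0)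
  have hterm : ∀ k l, |inc x k i * inc x l j - inc x k j * inc x l i| ≤ 2 * B ^ 2 := fun k l =>
    calc |inc x k i * inc x l j - inc x k j * inc x l i|
        ≤ |inc x k i| * |inc x l j| + |inc x k j| * |inc x l i| := by
          rw [← abs_mul, ← abs_mul]; exact abs_sub _ _
      _ ≤ B * B + B * B := by gcongr <;> grind
      _ = 2 * B ^ 2 := by ring
  rw [sarea_apply, abs_mul, abs_of_pos one_half_pos]
  linarith [abs_sum_Icc_sum_Icc_le hterm hmn]

lemma abs_driftSum_apply_le (hx : ∀ k, ‖inc x k‖ ≤ B) (v : Fin d → ℝ) {m n : ℕ} (hmn : m ≤ n)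
    (i j : Fin d) :
    |driftSum x v m n i j| ≤ ((n : ℝ) - m) ^ 2 * (4 * B * ‖v‖) := by
  have hxi : ∀ k i, |inc x k i| ≤ B := fun k i => (norm_le_pi_norm (inc x k) i).trans (hx k)
  have hv : ∀ i, |v i| ≤ ‖v‖ := norm_le_pi_norm v
  rw [driftSum_apply]
  refine abs_sum_Icc_sum_Icc_le (fun k l => ?_) hmn
  have hprod : ∀ a b : ℝ, |a| ≤ B → |b| ≤ ‖v‖ → |a * b| ≤ B * ‖v‖ := fun a b ha hb => by
    rw [abs_mul]; exact mul_le_mul ha hb (abs_nonneg _) ((abs_nonneg _).trans ha)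
  calc |v i * inc x k j + inc x l i * v j - (inc x k i * v j + v i * inc x l j)|
      ≤ |inc x k j * v i| + |inc x l i * v j| + (|inc x k i * v j| + |inc x l j * v i|) := by
        simp only [mul_comm (v i)]
        exact (abs_sub _ _).trans (add_le_add (abs_add_le _ _) (abs_add_le _ _))
    _ ≤ B * ‖v‖ + B * ‖v‖ + (B * ‖v‖ + B * ‖v‖) := by
        gcongr <;> exact hprod _ _ (hxi _ _) (hv _)
    _ = 4 * B * ‖v‖ := by ring

end Bounds

section Measurability

variable {Ω : Type*} [MeasurableSpace Ω] {d : ℕ} {X : ℕ → Ω → Fin d → ℝ}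

lemma measurable_sarea_apply (hX : ∀ n, Measurable (X n)) (m n : ℕ) (i j : Fin d) :
    Measurable fun ω => sarea (fun n => X n ω) m n i j := by
  simp only [sarea_apply, inc, Pi.sub_apply]
  fun_prop

lemma measurable_driftSum_apply (hX : ∀ n, Measurable (X n)) (v : Fin d → ℝ) (m n : ℕ)
    (i j : Fin d) :
    Measurable fun ω => driftSum (fun n => X n ω) v m n i j := by
  simp only [driftSum_apply, inc, Pi.sub_apply]
  fun_prop

end Measurability

lemma norm_inc_le {d : ℕ} {x : ℕ → Fin d → ℝ} {K : ℝ}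
    (hx : ∀ n, Real.sqrt (∑ i, (x (n + 1) i - x n i) ^ 2) ≤ K) (k : ℕ) : ‖inc x k‖ ≤ K := by
  have hK : 0 ≤ K := (Real.sqrt_nonneg _).trans (hx 0)
  refine (pi_norm_le_iff_of_nonneg hK).2 fun i => ?_
  cases k with
  | zero => simpa [inc] using hK
  | succ n =>
    rw [Real.norm_eq_abs]
    refine (Real.abs_le_sqrt ?_).trans (hx n)
    exact single_le_sum (f := fun i => (x (n + 1) i - x n i) ^ 2) (fun _ _ => sq_nonneg _)
      (mem_univ i)

section RandomTimes

variable {Ω : Type*} [MeasurableSpace Ω] {P : Measure Ω} {τ₁ τ₂ : Ω → ℕ}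

lemma measurable_comp_random_indices (hτ₁ : Measurable τ₁) (hτ₂ : Measurable τ₂)
    {F : ℕ → ℕ → Ω → ℝ} (hF : ∀ m n, Measurable (F m n)) :
    Measurable fun ω => F (τ₁ ω) (τ₂ ω) ω :=
  have hF' : Measurable fun q : Ω × (ℕ × ℕ) => F q.2.1 q.2.2 q.1 :=
    measurable_from_prod_countable_left fun p => hF p.1 p.2
  hF'.comp (measurable_id.prodMk (hτ₁.prodMk hτ₂))

lemma integrable_of_abs_le_sq_gap (hτ₁ : Measurable τ₁) (hτ₂ : Measurable τ₂)
    (hmom : Integrable (fun ω => ((τ₂ ω : ℝ) - τ₁ ω) ^ 2) P)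
    {F : ℕ → ℕ → Ω → ℝ} (hF : ∀ m n, Measurable (F m n)) {C : ℝ}
    (hFC : ∀ᵐ ω ∂P, |F (τ₁ ω) (τ₂ ω) ω| ≤ ((τ₂ ω : ℝ) - τ₁ ω) ^ 2 * C) :
    Integrable (fun ω => F (τ₁ ω) (τ₂ ω) ω) P :=
  (hmom.mul_const C).mono' (measurable_comp_random_indices hτ₁ hτ₂ hF).aestronglyMeasurable hFC

lemma integrable_gap [IsFiniteMeasure P] (hτ₁ : Measurable τ₁) (hτ₂ : Measurable τ₂)
    (hmom : Integrable (fun ω => ((τ₂ ω : ℝ) - τ₁ ω) ^ 2) P) :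
    Integrable (fun ω => (τ₂ ω : ℝ) - τ₁ ω) P :=
  have hmeas : AEStronglyMeasurable (fun ω => (τ₂ ω : ℝ) - τ₁ ω) P := by fun_prop
  ((memLp_two_iff_integrable_sq hmeas).2 hmom).integrable one_le_two

lemma integral_gap_pos [IsProbabilityMeasure P] (hlt : ∀ᵐ ω ∂P, τ₁ ω < τ₂ ω)
    (hgap : Integrable (fun ω => (τ₂ ω : ℝ) - τ₁ ω) P) :
    0 < ∫ ω, ((τ₂ ω : ℝ) - τ₁ ω) ∂P := by
  have hone : ∀ᵐ ω ∂P, (1 : ℝ) ≤ (τ₂ ω : ℝ) - τ₁ ω := hlt.mono fun ω h => by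
    rw [le_sub_iff_add_le']; exact_mod_cast h
  calc (0 : ℝ) < ∫ _, (1 : ℝ) ∂P := by simp
    _ ≤ _ := integral_mono_ae (integrable_const 1) hgap hone

end RandomTimes

/-- Decomposition of the area anomaly: if `(X_n)` has jumps bounded by `K` a.s. and
`τ_1 < τ_2` are a.s. finite integer random times with `E[(τ_2 − τ_1)²] < ∞`, then with
`X̄_n = X_n − n·v` and `Γ = E[A_{τ_1,τ_2}(X̄)] / E[τ_2 − τ_1]` one has
`Γ = E[A_{τ_1,τ_2}(X)] / E[τ_2 − τ_1]
   + E[Σ_{τ_1 < k < ℓ ≤ τ_2} ((v ⊗ ΔX_k + ΔX_ℓ ⊗ v) − (ΔX_k ⊗ v + v ⊗ ΔX_ℓ))] / (2 E[τ_2 − τ_1])`,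
with all the expectations finite and `E[τ_2 − τ_1] > 0`. -/
theorem area_anomaly_decomposition {d : ℕ} {Ω : Type*} [MeasurableSpace Ω]
    (P : Measure Ω) [IsProbabilityMeasure P]
    (X : ℕ → Ω → Fin d → ℝ) (hXmeas : ∀ n, Measurable (X n))
    (K : ℝ)
    (hbdd : ∀ᵐ ω ∂P, ∀ n, Real.sqrt (∑ i, (X (n + 1) ω i - X n ω i) ^ 2) ≤ K)
    (τ₁ τ₂ : Ω → ℕ) (hτ₁ : Measurable τ₁) (hτ₂ : Measurable τ₂)
    (hlt : ∀ᵐ ω ∂P, τ₁ ω < τ₂ ω)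
    (hmom : Integrable (fun ω => ((τ₂ ω : ℝ) - (τ₁ ω : ℝ)) ^ 2) P)
    (v : Fin d → ℝ) :
    0 < ∫ ω, ((τ₂ ω : ℝ) - (τ₁ ω : ℝ)) ∂P ∧
    (∀ i j, Integrable
      (fun ω => sarea (fun n => X n ω - (n : ℝ) • v) (τ₁ ω) (τ₂ ω) i j) P) ∧
    (∀ i j, Integrable (fun ω => sarea (fun n => X n ω) (τ₁ ω) (τ₂ ω) i j) P) ∧
    (∀ i j, Integrable (fun ω => driftSum (fun n => X n ω) v (τ₁ ω) (τ₂ ω) i j) P) ∧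
    (∫ ω, ((τ₂ ω : ℝ) - (τ₁ ω : ℝ)) ∂P)⁻¹ •
        matExp P (fun ω => sarea (fun n => X n ω - (n : ℝ) • v) (τ₁ ω) (τ₂ ω)) =
      (∫ ω, ((τ₂ ω : ℝ) - (τ₁ ω : ℝ)) ∂P)⁻¹ •
          matExp P (fun ω => sarea (fun n => X n ω) (τ₁ ω) (τ₂ ω)) +
        (2 * ∫ ω, ((τ₂ ω : ℝ) - (τ₁ ω : ℝ)) ∂P)⁻¹ •
          matExp P (fun ω => driftSum (fun n => X n ω) v (τ₁ ω) (τ₂ ω)) := by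
  have hgood : ∀ᵐ ω ∂P, τ₁ ω ≤ τ₂ ω ∧ ∀ k, ‖inc (fun n => X n ω) k‖ ≤ K :=
    hlt.and hbdd |>.mono fun ω h => ⟨h.1.le, norm_inc_le h.2⟩
  have hA : ∀ i j, Integrable (fun ω => sarea (fun n => X n ω) (τ₁ ω) (τ₂ ω) i j) P :=
    fun i j => integrable_of_abs_le_sq_gap hτ₁ hτ₂ hmom
      (fun m n => measurable_sarea_apply hXmeas m n i j)
      (hgood.mono fun ω h => abs_sarea_apply_le h.2 h.1 i j)
  have hD : ∀ i j, Integrable (fun ω => driftSum (fun n => X n ω) v (τ₁ ω) (τ₂ ω) i j) P :=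
    fun i j => integrable_of_abs_le_sq_gap hτ₁ hτ₂ hmom
      (fun m n => measurable_driftSum_apply hXmeas v m n i j)
      (hgood.mono fun ω h => abs_driftSum_apply_le h.2 v h.1 i j)
  have hshift : ∀ i j, (fun ω => sarea (fun n => X n ω - (n : ℝ) • v) (τ₁ ω) (τ₂ ω) i j) =
      fun ω => sarea (fun n => X n ω) (τ₁ ω) (τ₂ ω) i j +
        1 / 2 * driftSum (fun n => X n ω) v (τ₁ ω) (τ₂ ω) i j := fun i j => funext fun ω => by
    rw [sarea_sub_natCast_smul, Matrix.add_apply, Matrix.smul_apply, smul_eq_mul]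
  refine ⟨integral_gap_pos hlt (integrable_gap hτ₁ hτ₂ hmom), fun i j => ?_, hA, hD, ?_⟩
  · rw [hshift]
    exact (hA i j).add ((hD i j).const_mul _)
  · ext i j
    simp only [Matrix.add_apply, Matrix.smul_apply, matExp, of_apply, smul_eq_mul, hshift]
    rw [integral_add (hA i j) ((hD i j).const_mul _), integral_const_mul]
    ring
end

section
/- Overshoot moment bound: let (τ_k)_{k≥0} be integer-valued random variables on a probability space (Ω, F, P) with τ_0 = 0 and τ_k < τ_{k+1} P-a.s. for all k, and suppose E[(τ_{k+1} − τ_k)³] ≤ C for all k ≥ 0 and some C > 0. For n ∈ ℕ let κ(n) be the unique k with τ_k ≤ n < τ_{k+1}. Then E[τ_{κ(n)+1} − τ_{κ(n)}] ≤ C^{1/3} (n + 1)^{1/3} for every n ∈ ℕ. -/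
/-!
On the event `{κ(n) = k}` the overshoot gap is the `k`-th gap, and `κ(n) ≤ n` because
`k ≤ τ_k` for a strictly increasing sequence of natural numbers. Hence the cube of the overshoot
gap is dominated by the sum of the cubes of the first `n + 1` gaps, so its third moment is at most
`(n + 1) C`, and Jensen's inequality `(E X)³ ≤ E X³` turns this into the bound on the first moment.
-/

open MeasureTheory Finset

section IndexedFamily

variable {Ω ι : Type*} [MeasurableSpace Ω] {μ : Measure Ω} {κ : Ω → ι} {h : ι → Ω → ℝ}
  {s : Finset ι}

lemma ae_eq_sum_indicator_comp_index (hκs : ∀ᵐ ω ∂μ, κ ω ∈ s) :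
    (fun ω => h (κ ω) ω) =ᵐ[μ] fun ω => ∑ k ∈ s, {ω' | κ ω' = k}.indicator (h k) ω := by
  classical
  filter_upwards [hκs] with ω hω
  simp only [Set.indicator_apply, Set.mem_ofPred_eq]
  rw [sum_ite_eq, if_pos hω]

variable [MeasurableSpace ι] [MeasurableSingletonClass ι]

lemma integrable_comp_index (hh : ∀ k, Integrable (h k) μ) (hκ : Measurable κ)
    (hκs : ∀ᵐ ω ∂μ, κ ω ∈ s) : Integrable (fun ω => h (κ ω) ω) μ :=
  (integrable_finsetSum _ fun k _ => (hh k).indicator (hκ (measurableSet_singleton k))).congr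
    (ae_eq_sum_indicator_comp_index hκs).symm

lemma integral_comp_index_le_sum (hh : ∀ k, Integrable (h k) μ) (hh0 : ∀ k, 0 ≤ᵐ[μ] h k)
    (hκ : Measurable κ) (hκs : ∀ᵐ ω ∂μ, κ ω ∈ s) :
    ∫ ω, h (κ ω) ω ∂μ ≤ ∑ k ∈ s, ∫ ω, h k ω ∂μ := by
  have hind : ∀ k, Integrable ({ω | κ ω = k}.indicator (h k)) μ := fun k =>
    (hh k).indicator (hκ (measurableSet_singleton k))
  rw [integral_congr_ae (ae_eq_sum_indicator_comp_index hκs),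
    integral_finsetSum _ fun k _ => hind k]
  refine sum_le_sum fun k _ => integral_mono_ae (hind k) (hh k) ?_
  filter_upwards [hh0 k] with ω hω
  exact Set.indicator_le_self' (fun _ _ => hω) ω

end IndexedFamily

lemma integral_pow_le_integral_pow {Ω : Type*} [MeasurableSpace Ω] {μ : Measure Ω}
    [IsProbabilityMeasure μ] {f : Ω → ℝ} {n : ℕ} (hn : n ≠ 0) (hf0 : 0 ≤ᵐ[μ] f)
    (hfn : Integrable (fun ω => f ω ^ n) μ) :
    (∫ ω, f ω ∂μ) ^ n ≤ ∫ ω, f ω ^ n ∂μ := by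
  by_cases hfi : Integrable f μ
  · exact (convexOn_pow n).map_integral_le (continuous_pow n).continuousOn isClosed_Ici hf0 hfi
      hfn
  · rw [integral_undef hfi, zero_pow hn]
    exact integral_nonneg_of_ae (hf0.mono fun ω h => pow_nonneg h n)

theorem overshoot_moment_bound_general {Ω : Type*} [MeasurableSpace Ω]
    (P : Measure Ω) [IsProbabilityMeasure P]
    (τ : ℕ → Ω → ℕ)
    (hmono : ∀ᵐ ω ∂P, ∀ k, τ k ω < τ (k + 1) ω)
    (C : ℝ) (hC : 0 < C)
    (hint : ∀ k, Integrable (fun ω => ((τ (k + 1) ω : ℝ) - (τ k ω : ℝ)) ^ 3) P)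
    (hmom : ∀ k, ∫ ω, ((τ (k + 1) ω : ℝ) - (τ k ω : ℝ)) ^ 3 ∂P ≤ C)
    (κ : ℕ → Ω → ℕ) (hκmeas : ∀ n, Measurable (κ n))
    (hκ : ∀ᵐ ω ∂P, ∀ n, τ (κ n ω) ω ≤ n ∧ n < τ (κ n ω + 1) ω) :
    ∀ n : ℕ, ∫ ω, ((τ (κ n ω + 1) ω : ℝ) - (τ (κ n ω) ω : ℝ)) ∂P ≤
      C ^ ((1 : ℝ) / 3) * ((n : ℝ) + 1) ^ ((1 : ℝ) / 3) := by
  intro n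
  set gap : ℕ → Ω → ℝ := fun k ω => (τ (k + 1) ω : ℝ) - (τ k ω : ℝ)
  have hgap0 : ∀ᵐ ω ∂P, ∀ k, 0 ≤ gap k ω := hmono.mono fun ω h k => by
    simpa [gap] using (h k).le
  have hκn : ∀ᵐ ω ∂P, κ n ω ∈ range (n + 1) := by
    filter_upwards [hmono, hκ] with ω hmo hk
    exact mem_range_succ_iff.2 ((strictMono_nat_of_lt_succ hmo).le_apply.trans (hk n).1)
  have hcube : ∫ ω, gap (κ n ω) ω ^ 3 ∂P ≤ ((n : ℝ) + 1) * C := by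
    refine (integral_comp_index_le_sum (h := fun k ω => gap k ω ^ 3) hint
      (fun k => hgap0.mono fun ω h => pow_nonneg (h k) 3) (hκmeas n) hκn).trans ?_
    calc ∑ k ∈ range (n + 1), ∫ ω, gap k ω ^ 3 ∂P ≤ #(range (n + 1)) • C :=
          sum_le_card_nsmul _ _ _ fun k _ => hmom k
      _ = ((n : ℝ) + 1) * C := by simp
  have hF0 : 0 ≤ᵐ[P] fun ω => gap (κ n ω) ω := hgap0.mono fun ω h => h _
  have hjensen : (∫ ω, gap (κ n ω) ω ∂P) ^ 3 ≤ ∫ ω, gap (κ n ω) ω ^ 3 ∂P :=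
    integral_pow_le_integral_pow three_ne_zero hF0
      (integrable_comp_index (h := fun k ω => gap k ω ^ 3) hint (hκmeas n) hκn)
  calc ∫ ω, gap (κ n ω) ω ∂P ≤ (((n : ℝ) + 1) * C) ^ ((1 : ℝ) / 3) := by
        rw [one_div, Real.le_rpow_inv_iff_of_pos (integral_nonneg_of_ae hF0) (by positivity)
          (by norm_num), Real.rpow_ofNat]
        exact hjensen.trans hcube
    _ = C ^ ((1 : ℝ) / 3) * ((n : ℝ) + 1) ^ ((1 : ℝ) / 3) := by
        rw [mul_comm, Real.mul_rpow hC.le (by positivity)]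

/-- Overshoot moment bound: if `(τ_k)` are integer random times with `τ_0 = 0`,
`τ_k < τ_{k+1}` a.s., `E[(τ_{k+1} − τ_k)³] ≤ C` for all `k`, and `κ(n)` is the unique `k`
with `τ_k ≤ n < τ_{k+1}`, then `E[τ_{κ(n)+1} − τ_{κ(n)}] ≤ C^{1/3} (n + 1)^{1/3}`. -/
theorem overshoot_moment_bound {Ω : Type*} [MeasurableSpace Ω]
    (P : Measure Ω) [IsProbabilityMeasure P]
    (τ : ℕ → Ω → ℕ) (hτmeas : ∀ k, Measurable (τ k))
    (hτ0 : ∀ ω, τ 0 ω = 0)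
    (hmono : ∀ᵐ ω ∂P, ∀ k, τ k ω < τ (k + 1) ω)
    (C : ℝ) (hC : 0 < C)
    (hint : ∀ k, Integrable (fun ω => ((τ (k + 1) ω : ℝ) - (τ k ω : ℝ)) ^ 3) P)
    (hmom : ∀ k, ∫ ω, ((τ (k + 1) ω : ℝ) - (τ k ω : ℝ)) ^ 3 ∂P ≤ C)
    (κ : ℕ → Ω → ℕ) (hκmeas : ∀ n, Measurable (κ n))
    (hκ : ∀ᵐ ω ∂P, ∀ n, τ (κ n ω) ω ≤ n ∧ n < τ (κ n ω + 1) ω) :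
    ∀ n : ℕ, ∫ ω, ((τ (κ n ω + 1) ω : ℝ) - (τ (κ n ω) ω : ℝ)) ∂P ≤
      C ^ ((1 : ℝ) / 3) * ((n : ℝ) + 1) ^ ((1 : ℝ) / 3) :=
  overshoot_moment_bound_general P τ hmono C hC hint hmom κ hκmeas hκ
end

section
/- Speed formula: let (X_n)_{n≥0} be a discrete-time process on ℝ^d admitting a regeneration structure with regeneration times (τ_k)_{k≥0}, with |X_{n+1} − X_n| ≤ K P-a.s. for some constant K, and with E[τ_2 − τ_1] < ∞. If X_n / n → v P-a.s. for some v ∈ ℝ^d, then v = E[X_{τ_2} − X_{τ_1}] / E[τ_2 − τ_1]. -/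
open Matrix Finset MeasureTheory ProbabilityTheory

/-- The `k`-th regeneration block of the process `X` with respect to the random times `τ`:
the pair consisting of the length `τ_k − τ_{k−1}` and the increments
`(X_{τ_{k−1}+m} − X_{τ_{k−1}})_{0 ≤ m ≤ τ_k − τ_{k−1}}` (the path is stopped at the end of
the block, so that the pair carries exactly the information of the block). -/
noncomputable def block {Ω : Type*} {d : ℕ} (X : ℕ → Ω → Fin d → ℝ) (τ : ℕ → Ω → ℕ)
    (k : ℕ) (ω : Ω) : ℕ × (ℕ → Fin d → ℝ) :=
  (τ k ω - τ (k - 1) ω,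
    fun m => X (τ (k - 1) ω + min m (τ k ω - τ (k - 1) ω)) ω - X (τ (k - 1) ω) ω)

/-- A discrete-time process `(X_n)` on `ℝ^d` admits a regeneration structure with
regeneration times `(τ_k)` if `0 = τ_0 < τ_1 < τ_2 < ... < ∞` a.s. and the blocks
`(τ_k − τ_{k−1}, (X_{τ_{k−1}+m} − X_{τ_{k−1}})_{0 ≤ m ≤ τ_k − τ_{k−1}})`, `k ≥ 1`, are
independent, and identically distributed for `k ≥ 2`. -/
structure IsRegenerationStructure {Ω : Type*} [MeasurableSpace Ω] (P : Measure Ω) {d : ℕ}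
    (X : ℕ → Ω → Fin d → ℝ) (τ : ℕ → Ω → ℕ) : Prop where
  measX : ∀ n, Measurable (X n)
  measτ : ∀ k, Measurable (τ k)
  zero : ∀ᵐ ω ∂P, τ 0 ω = 0
  mono : ∀ᵐ ω ∂P, ∀ k, τ k ω < τ (k + 1) ω
  indep : iIndepFun (fun k => block X τ (k + 1)) P
  ident : ∀ k, 2 ≤ k → IdentDistrib (block X τ k) (block X τ 2) P P

/-
The blocks after the first are i.i.d., so by the strong law of large numbers the Cesàro averages
of their lengths and of their increments converge a.s. to `E[τ₂ − τ₁]` and `E[X_{τ₂} − X_{τ₁}]`;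
the increments are integrable because a block of length `ℓ` moves the walk by at most `K ℓ`.
These sums telescope to `τ_{n+1} − τ₁` and `X_{τ_{n+1}} − X_{τ₁}`, so `X_{τ_{n+1}} / n` tends
both to `E[X_{τ₂} − X_{τ₁}]` and, since `X_m / m → v` along `m = τ_{n+1}`, to `E[τ₂ − τ₁] • v`.
-/

open Filter Topology

lemma norm_le_sqrt_sum_sq {ι : Type*} [Fintype ι] (x : ι → ℝ) : ‖x‖ ≤ √(∑ i, x i ^ 2) := by
  refine (pi_norm_le_iff_of_nonneg (Real.sqrt_nonneg _)).2 fun i => ?_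
  calc ‖x i‖ = ‖(WithLp.toLp 2 x : EuclideanSpace ℝ ι) i‖ := rfl
    _ ≤ ‖(WithLp.toLp 2 x : EuclideanSpace ℝ ι)‖ := PiLp.norm_apply_le _ i
    _ = √(∑ i, x i ^ 2) := by simp [EuclideanSpace.norm_eq]

lemma norm_sub_le_of_norm_succ_sub_le {E : Type*} [SeminormedAddCommGroup E] {x : ℕ → E}
    {K : ℝ} (h : ∀ n, ‖x (n + 1) - x n‖ ≤ K) (a m : ℕ) : ‖x (a + m) - x a‖ ≤ K * m := by
  calc ‖x (a + m) - x a‖ = dist (x (a + 0)) (x (a + m)) := by rw [dist_comm, dist_eq_norm]; rfl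
    _ ≤ ∑ i ∈ Finset.range m, dist (x (a + i)) (x (a + (i + 1))) :=
      dist_le_range_sum_dist (fun i => x (a + i)) m
    _ ≤ ∑ _i ∈ Finset.range m, K :=
      Finset.sum_le_sum fun i _ => by rw [dist_comm, dist_eq_norm]; exact h (a + i)
    _ = K * m := by simp [mul_comm]

lemma tendsto_inv_smul_of_tendsto_inv_smul_sub {E : Type*} [NormedAddCommGroup E]
    [NormedSpace ℝ E] {y : ℕ → E} {c l : E}
    (h : Tendsto (fun n : ℕ => (n : ℝ)⁻¹ • (y n - c)) atTop (𝓝 l)) :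
    Tendsto (fun n : ℕ => (n : ℝ)⁻¹ • y n) atTop (𝓝 l) := by
  have hc : Tendsto (fun n : ℕ => (n : ℝ)⁻¹ • c) atTop (𝓝 0) := by
    simpa using (tendsto_inv_atTop_nhds_zero_nat (𝕜 := ℝ)).smul_const c
  simpa [smul_sub] using h.add hc

lemma smul_eq_of_tendsto_inv_smul_comp {E : Type*} [NormedAddCommGroup E] [NormedSpace ℝ E]
    {x : ℕ → E} {v : E} (hx : Tendsto (fun n : ℕ => (n : ℝ)⁻¹ • x n) atTop (𝓝 v))
    {t : ℕ → ℕ} (ht : Tendsto t atTop atTop) {e : ℝ}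
    (hte : Tendsto (fun n : ℕ => (n : ℝ)⁻¹ • (t n : ℝ)) atTop (𝓝 e)) {l : E}
    (hl : Tendsto (fun n : ℕ => (n : ℝ)⁻¹ • x (t n)) atTop (𝓝 l)) : e • v = l := by
  refine tendsto_nhds_unique ?_ hl
  refine (hte.smul (hx.comp ht)).congr' ?_
  filter_upwards [ht.eventually_ne_atTop 0] with n hn
  simp only [Function.comp_apply, smul_eq_mul, smul_smul]
  rw [mul_assoc, mul_inv_cancel₀ (Nat.cast_ne_zero.2 hn), mul_one]

section Blocks

variable {Ω : Type*} {d : ℕ}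

lemma measurable_eval_random_index [MeasurableSpace Ω] {α : Type*} [MeasurableSpace α]
    {X : ℕ → Ω → α} (hX : ∀ n, Measurable (X n)) {N : Ω → ℕ} (hN : Measurable N) :
    Measurable fun ω => X (N ω) ω :=
  (measurable_from_prod_countable_left (f := fun p : Ω × ℕ => X p.2 p.1) hX).comp
    (measurable_id.prodMk hN)

lemma measurable_block [MeasurableSpace Ω] {X : ℕ → Ω → Fin d → ℝ} {τ : ℕ → Ω → ℕ}
    (hX : ∀ n, Measurable (X n)) (hτ : ∀ k, Measurable (τ k)) (k : ℕ) :
    Measurable (block X τ k) := by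
  refine ((hτ k).sub (hτ (k - 1))).prodMk (measurable_pi_lambda _ fun m => ?_)
  exact (measurable_eval_random_index hX
    ((hτ (k - 1)).add (measurable_const.min ((hτ k).sub (hτ (k - 1)))))).sub
    (measurable_eval_random_index hX (hτ (k - 1)))

def blockLength (b : ℕ × (ℕ → Fin d → ℝ)) : ℝ := b.1

def blockIncrement (b : ℕ × (ℕ → Fin d → ℝ)) : Fin d → ℝ := b.2 b.1

lemma measurable_blockLength : Measurable (blockLength (d := d)) :=
  measurable_from_top.comp measurable_fst

lemma measurable_blockIncrement : Measurable (blockIncrement (d := d)) :=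
  measurable_from_prod_countable_right fun n => measurable_pi_apply n

lemma blockLength_block {X : ℕ → Ω → Fin d → ℝ} {τ : ℕ → Ω → ℕ} {k : ℕ} {ω : Ω}
    (h : τ (k - 1) ω ≤ τ k ω) :
    blockLength (block X τ k ω) = (τ k ω : ℝ) - τ (k - 1) ω := by
  simp [blockLength, block, Nat.cast_sub h]

lemma blockIncrement_block {X : ℕ → Ω → Fin d → ℝ} {τ : ℕ → Ω → ℕ} {k : ℕ} {ω : Ω}
    (h : τ (k - 1) ω ≤ τ k ω) :
    blockIncrement (block X τ k ω) = X (τ k ω) ω - X (τ (k - 1) ω) ω := by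
  simp [blockIncrement, block, Nat.add_sub_cancel' h]

lemma sum_blockLength {X : ℕ → Ω → Fin d → ℝ} {τ : ℕ → Ω → ℕ} {ω : Ω}
    (hτ : Monotone (τ · ω)) (n : ℕ) :
    ∑ k ∈ Finset.range n, blockLength (block X τ (k + 2) ω) = (τ (n + 1) ω : ℝ) - τ 1 ω := by
  rw [← Finset.sum_range_sub (fun k => (τ (k + 1) ω : ℝ))]
  exact Finset.sum_congr rfl fun k _ => blockLength_block (hτ (Nat.le_succ _))

lemma sum_blockIncrement {X : ℕ → Ω → Fin d → ℝ} {τ : ℕ → Ω → ℕ} {ω : Ω}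
    (hτ : Monotone (τ · ω)) (n : ℕ) :
    ∑ k ∈ Finset.range n, blockIncrement (block X τ (k + 2) ω) =
      X (τ (n + 1) ω) ω - X (τ 1 ω) ω := by
  rw [← Finset.sum_range_sub (fun k => X (τ (k + 1) ω) ω)]
  exact Finset.sum_congr rfl fun k _ => blockIncrement_block (hτ (Nat.le_succ _))

lemma smul_eq_of_tendsto_inv_smul_sum_block {X : ℕ → Ω → Fin d → ℝ} {τ : ℕ → Ω → ℕ} {ω : Ω}
    (hτ : StrictMono (τ · ω)) {v : Fin d → ℝ}
    (hv : Tendsto (fun n : ℕ => (n : ℝ)⁻¹ • X n ω) atTop (𝓝 v)) {e : ℝ}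
    (he : Tendsto
      (fun n : ℕ => (n : ℝ)⁻¹ • ∑ k ∈ Finset.range n, blockLength (block X τ (k + 2) ω))
      atTop (𝓝 e)) {l : Fin d → ℝ}
    (hl : Tendsto
      (fun n : ℕ => (n : ℝ)⁻¹ • ∑ k ∈ Finset.range n, blockIncrement (block X τ (k + 2) ω))
      atTop (𝓝 l)) :
    e • v = l := by
  simp only [sum_blockLength hτ.monotone] at he
  simp only [sum_blockIncrement hτ.monotone] at hl
  exact smul_eq_of_tendsto_inv_smul_comp hv (hτ.comp (strictMono_id.add_const 1)).tendsto_atTop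
    (tendsto_inv_smul_of_tendsto_inv_smul_sub he) (tendsto_inv_smul_of_tendsto_inv_smul_sub hl)

end Blocks

namespace IsRegenerationStructure

variable {Ω : Type*} [MeasurableSpace Ω] {P : Measure Ω} {d : ℕ} {X : ℕ → Ω → Fin d → ℝ}
  {τ : ℕ → Ω → ℕ}

lemma ae_monotone (hreg : IsRegenerationStructure P X τ) : ∀ᵐ ω ∂P, Monotone (τ · ω) := by
  filter_upwards [hreg.mono] with ω hω using monotone_nat_of_le_succ fun k => (hω k).le

lemma ae_tendsto_inv_smul_sum_block (hreg : IsRegenerationStructure P X τ)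
    {E : Type*} [NormedAddCommGroup E] [NormedSpace ℝ E] [CompleteSpace E] [MeasurableSpace E]
    [BorelSpace E] {f : ℕ × (ℕ → Fin d → ℝ) → E} (hf : Measurable f)
    (hint : Integrable (fun ω => f (block X τ 2 ω)) P) :
    ∀ᵐ ω ∂P, Tendsto (fun n : ℕ => (n : ℝ)⁻¹ • ∑ k ∈ Finset.range n, f (block X τ (k + 2) ω))
      atTop (𝓝 (∫ ω, f (block X τ 2 ω) ∂P)) :=
  strong_law_ae (fun k => f ∘ block X τ (k + 2)) hint
    (fun i j hij => (hreg.indep.indepFun (by omega : i + 1 ≠ j + 1)).comp hf hf)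
    (fun k => (hreg.ident (k + 2) (by omega)).comp hf)

lemma integral_blockLength (hreg : IsRegenerationStructure P X τ) :
    ∫ ω, blockLength (block X τ 2 ω) ∂P = ∫ ω, ((τ 2 ω : ℝ) - τ 1 ω) ∂P :=
  integral_congr_ae <| by
    filter_upwards [hreg.ae_monotone] with ω hω using blockLength_block (hω (Nat.le_succ 1))

lemma integral_blockIncrement (hreg : IsRegenerationStructure P X τ) :
    ∫ ω, blockIncrement (block X τ 2 ω) ∂P = ∫ ω, (X (τ 2 ω) ω - X (τ 1 ω) ω) ∂P :=
  integral_congr_ae <| by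
    filter_upwards [hreg.ae_monotone] with ω hω using blockIncrement_block (hω (Nat.le_succ 1))

lemma integrable_blockLength (hreg : IsRegenerationStructure P X τ)
    (hint : Integrable (fun ω => ((τ 2 ω : ℝ) - τ 1 ω)) P) :
    Integrable (fun ω => blockLength (block X τ 2 ω)) P :=
  hint.congr <| by
    filter_upwards [hreg.ae_monotone] with ω hω
    exact (blockLength_block (hω (Nat.le_succ 1))).symm

lemma integrable_blockIncrement (hreg : IsRegenerationStructure P X τ) {K : ℝ}
    (hbdd : ∀ᵐ ω ∂P, ∀ n, ‖X (n + 1) ω - X n ω‖ ≤ K)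
    (hint : Integrable (fun ω => ((τ 2 ω : ℝ) - τ 1 ω)) P) :
    Integrable (fun ω => blockIncrement (block X τ 2 ω)) P := by
  have hmeas := measurable_blockIncrement.comp (measurable_block hreg.measX hreg.measτ 2)
  refine (hint.const_mul K).mono' hmeas.aestronglyMeasurable ?_
  filter_upwards [hreg.ae_monotone, hbdd] with ω hω hK
  have h12 : τ 1 ω ≤ τ 2 ω := hω (Nat.le_succ 1)
  have := norm_sub_le_of_norm_succ_sub_le (x := (X · ω)) hK (τ 1 ω) (τ 2 ω - τ 1 ω)
  rwa [Nat.add_sub_cancel' h12, Nat.cast_sub h12, ← blockIncrement_block h12] at this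

lemma one_le_integral_regeneration_length (hreg : IsRegenerationStructure P X τ)
    [IsProbabilityMeasure P] (hint : Integrable (fun ω => ((τ 2 ω : ℝ) - τ 1 ω)) P) :
    1 ≤ ∫ ω, ((τ 2 ω : ℝ) - τ 1 ω) ∂P := by
  calc (1 : ℝ) = ∫ _ω, (1 : ℝ) ∂P := by simp
    _ ≤ _ := integral_mono_ae (integrable_const 1) hint <| by
      filter_upwards [hreg.mono] with ω hω
      have : (τ 1 ω : ℝ) + 1 ≤ τ 2 ω := by exact_mod_cast hω 1
      linarith

end IsRegenerationStructure

/-- Speed formula: if `(X_n)` admits a regeneration structure with regeneration times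
`(τ_k)`, has jumps bounded by `K` a.s., `E[τ_2 − τ_1] < ∞`, and `X_n / n → v` a.s., then
`v = E[X_{τ_2} − X_{τ_1}] / E[τ_2 − τ_1]`. -/
theorem speed_formula {Ω : Type*} [MeasurableSpace Ω] (P : Measure Ω)
    [IsProbabilityMeasure P] {d : ℕ} (X : ℕ → Ω → Fin d → ℝ) (τ : ℕ → Ω → ℕ)
    (hreg : IsRegenerationStructure P X τ)
    (K : ℝ)
    (hbdd : ∀ᵐ ω ∂P, ∀ n, Real.sqrt (∑ i, (X (n + 1) ω i - X n ω i) ^ 2) ≤ K)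
    (hint : Integrable (fun ω => ((τ 2 ω : ℝ) - (τ 1 ω : ℝ))) P)
    (v : Fin d → ℝ)
    (hlln : ∀ᵐ ω ∂P, Filter.Tendsto (fun n : ℕ => ((n : ℝ))⁻¹ • X n ω) Filter.atTop (nhds v)) :
    v = (∫ ω, ((τ 2 ω : ℝ) - (τ 1 ω : ℝ)) ∂P)⁻¹ •
      ∫ ω, (X (τ 2 ω) ω - X (τ 1 ω) ω) ∂P := by
  have hbdd' : ∀ᵐ ω ∂P, ∀ n, ‖X (n + 1) ω - X n ω‖ ≤ K := by
    filter_upwards [hbdd] with ω hω n using (norm_le_sqrt_sum_sq _).trans (hω n)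
  have hlen := hreg.ae_tendsto_inv_smul_sum_block measurable_blockLength
    (hreg.integrable_blockLength hint)
  have hinc := hreg.ae_tendsto_inv_smul_sum_block measurable_blockIncrement
    (hreg.integrable_blockIncrement hbdd' hint)
  obtain ⟨ω, hτ, hv, he, hl⟩ := (hreg.mono.and (hlln.and (hlen.and hinc))).exists
  have key := smul_eq_of_tendsto_inv_smul_sum_block (strictMono_nat_of_lt_succ hτ) hv he hl
  rw [hreg.integral_blockLength, hreg.integral_blockIncrement] at key
  have hpos := zero_lt_one.trans_le (hreg.one_le_integral_regeneration_length hint)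
  rw [← key, inv_smul_smul₀ hpos.ne']
end
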